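/- arXiv:1205.6448 — 3 statements merged into one kernel-verified Lean document; each statement's English description precedes it below -/
import Mathlib

section
/- Suppose s ∈ G is fixed by ε, the centralizer C_G(s) is abelian, and g ∈ G is such that g·s·g⁻¹ is also fixed by ε. Then g⁻¹·ε(g) lies in C_G(s), and for every ε-fixed element t of C_G(s), the conjugate g·t·g⁻¹ is also fixed by ε. -/
theorem twisted_fixed_conj {G : Type*} [Group G] (ε : MulAut G) (s g : G)
    (hs : ε s = s)
    (hab : ∀ a ∈ Subgroup.centralizer {s}, ∀ b ∈ Subgroup.centralizer {s}, Commute a b)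
    (hg : ε (g * s * g⁻¹) = g * s * g⁻¹) :
    g⁻¹ * ε g ∈ Subgroup.centralizer {s} ∧
    (∀ t ∈ Subgroup.centralizer {s}, ε t = t → ε (g * t * g⁻¹) = g * t * g⁻¹) := by
  have key : g⁻¹ * ε g ∈ Subgroup.centralizer {s} := by
    rw [Subgroup.mem_centralizer_singleton_iff]
    have h1 : ε g * s * (ε g)⁻¹ = g * s * g⁻¹ := by
      simpa [map_mul, map_inv, hs] using hg
    group
    -- turn h1 into s * (g⁻¹ * ε g) = (g⁻¹ * ε g) * s
    have := h1
    -- s * g⁻¹ * ε g = g⁻¹ * ε g * s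
    have h2 : s * (g⁻¹ * ε g) = (g⁻¹ * ε g) * s := by
      have : g⁻¹ * (ε g * s * (ε g)⁻¹) * g = g⁻¹ * (g * s * g⁻¹) * g := by rw [h1]
      group at this
      calc s * (g⁻¹ * ε g) = (g⁻¹ * (g * s * g⁻¹) * g) * (g⁻¹ * ε g) := by group
        _ = (g⁻¹ * (ε g * s * (ε g)⁻¹) * g) * (g⁻¹ * ε g) := by rw [h1]
        _ = (g⁻¹ * ε g) * s := by group
    group at h2 ⊢
    exact h2.symm
  refine ⟨key, fun t ht hεt => ?_⟩
  have hcomm : Commute (g⁻¹ * ε g) t := hab _ key _ ht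
  have : ε (g * t * g⁻¹) = ε g * t * (ε g)⁻¹ := by simp [map_mul, map_inv, hεt]
  rw [this]
  have h3 : ε g * t * (ε g)⁻¹ = g * ((g⁻¹ * ε g) * t * (g⁻¹ * ε g)⁻¹) * g⁻¹ := by group
  rw [h3, hcomm.eq]
  group
end

section
/- Suppose n ∈ G is such that n⁻¹·εⁱ(n) centralizes s for every integer i, where s = N(s̃), and suppose C_G(s) is abelian and contains εʲ(s̃) for all j. Then n·s·n⁻¹ = N(n·s̃·n⁻¹). In particular, if additionally n·s̃·n⁻¹ lies in an ε-invariant abelian subgroup S̃ of G containing s̃, then n·s·n⁻¹ lies in the image of the restriction of N to S̃. -/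
/-- The norm map `N(t) = t · ε(t) · ε²(t) ⋯ ε^{ℓ-1}(t)`. -/
def normMap {G : Type*} [Group G] (ε : MulAut G) (ℓ : ℕ) (t : G) : G :=
  ((List.range ℓ).map (fun i => (ε ^ i) t)).prod

theorem conj_norm_in_image {G : Type*} [Group G] (ε : MulAut G) (ℓ : ℕ)
    (hℓ : 0 < ℓ) (hord : ε ^ ℓ = 1) (n st : G) (s : G) (hs : s = normMap ε ℓ st)
    (hn : ∀ i : ℤ, n⁻¹ * (ε ^ i) n ∈ Subgroup.centralizer {s})
    (hab : ∀ a ∈ Subgroup.centralizer {s}, ∀ b ∈ Subgroup.centralizer {s}, Commute a b)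
    (hsj : ∀ j : ℤ, (ε ^ j) st ∈ Subgroup.centralizer {s}) :
    n * s * n⁻¹ = normMap ε ℓ (n * st * n⁻¹) ∧
    (∀ St : Subgroup G, Subgroup.map ε.toMonoidHom St = St →
      (∀ a ∈ St, ∀ b ∈ St, Commute a b) → st ∈ St → n * st * n⁻¹ ∈ St →
      ∃ x ∈ St, normMap ε ℓ x = n * s * n⁻¹) := by
  have h1 : ∀ i : ℕ, (ε ^ i) (n * st * n⁻¹) = n * (ε ^ i) st * n⁻¹ := by
    intro i
    have hc : n⁻¹ * (ε ^ i) n ∈ Subgroup.centralizer {s} := by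
      have := hn (i : ℤ); rwa [zpow_natCast] at this
    have hst : (ε ^ i) st ∈ Subgroup.centralizer {s} := by
      have := hsj (i : ℤ); rwa [zpow_natCast] at this
    have hcomm : Commute (n⁻¹ * (ε ^ i) n) ((ε ^ i) st) := hab _ hc _ hst
    have e1 : (ε ^ i) (n * st * n⁻¹) = (ε ^ i) n * (ε ^ i) st * ((ε ^ i) n)⁻¹ := by
      simp [map_mul]
    have e2 : (ε ^ i) n * (ε ^ i) st * ((ε ^ i) n)⁻¹
        = n * ((n⁻¹ * (ε ^ i) n) * (ε ^ i) st * (n⁻¹ * (ε ^ i) n)⁻¹) * n⁻¹ := by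
      group
    rw [e1, e2, hcomm.eq, mul_inv_cancel_right]
  have key : normMap ε ℓ (n * st * n⁻¹) = n * s * n⁻¹ := by
    unfold normMap
    have : (List.range ℓ).map (fun i => (ε ^ i) (n * st * n⁻¹))
        = (List.range ℓ).map ((MulAut.conj n).toMonoidHom ∘ fun i => (ε ^ i) st) := by
      apply List.map_congr_left
      intro i _
      simp [h1 i, MulAut.conj_apply]
    rw [this, ← List.map_map, ← map_list_prod, hs]
    rfl
  refine ⟨key.symm, fun St _ _ _ hmem => ⟨n * st * n⁻¹, hmem, key⟩⟩
end

section
/- Let G be a group, ε an automorphism of G with ε^ℓ = id, N(t) = t·ε(t)⋯ε^{ℓ-1}(t), and S̃ an ε-invariant abelian subgroup. If g ∈ G satisfies g·s̃·ε(g)⁻¹ ∈ S̃ for some s̃ ∈ S̃, then g·N(s̃)·g⁻¹ ∈ Im(N|_{S̃}) ⊆ S̃^ε; in particular g·N(s̃)·g⁻¹ is fixed by ε. -/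
theorem conj_norm_mem_image {G : Type*} [Group G] (ε : MulAut G) (ℓ : ℕ)
    (hℓ : 0 < ℓ) (hord : ε ^ ℓ = 1)
    (St : Subgroup G) (hinv : Subgroup.map ε.toMonoidHom St = St)
    (hab : ∀ a ∈ St, ∀ b ∈ St, Commute a b)
    (st : G) (hst : st ∈ St) (g : G) (hg : g * st * (ε g)⁻¹ ∈ St) :
    (∃ x ∈ St, normMap ε ℓ x = g * normMap ε ℓ st * g⁻¹) ∧
    g * normMap ε ℓ st * g⁻¹ ∈ St ∧
    ε (g * normMap ε ℓ st * g⁻¹) = g * normMap ε ℓ st * g⁻¹ := by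
  obtain ⟨n, rfl⟩ : ∃ n, ℓ = n + 1 := ⟨ℓ - 1, (Nat.succ_pred_eq_of_pos hℓ).symm⟩
  set u := g * st * (ε g)⁻¹ with hu
  have hεmem : ∀ x ∈ St, ε x ∈ St := by
    intro x hx
    rw [← hinv]; exact ⟨x, hx, rfl⟩
  have hεpow : ∀ (k : ℕ), ∀ x ∈ St, (ε ^ k) x ∈ St := by
    intro k
    induction k with
    | zero => intro x hx; simpa using hx
    | succ k ih =>
      intro x hx
      have : (ε ^ (k + 1)) x = (ε ^ k) (ε x) := by
        rw [pow_succ, MulAut.mul_apply]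
      rw [this]; exact ih _ (hεmem x hx)
  -- telescoping
  have key : ∀ m : ℕ, ((List.range m).map (fun i => (ε ^ i) u)).prod
      = g * ((List.range m).map (fun i => (ε ^ i) st)).prod * ((ε ^ m) g)⁻¹ := by
    intro m
    induction m with
    | zero => simp
    | succ m ih =>
      rw [List.range_succ, List.map_append, List.map_append, List.prod_append,
        List.prod_append, ih]
      have h1 : (ε ^ m) u = (ε ^ m) g * (ε ^ m) st * ((ε ^ (m + 1)) g)⁻¹ := by
        rw [hu, map_mul, map_mul, map_inv, pow_succ, MulAut.mul_apply]
      simp only [List.map_cons, List.map_nil, List.prod_cons, List.prod_nil, mul_one, h1]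
      group
  have hNu : normMap ε (n + 1) u = g * normMap ε (n + 1) st * g⁻¹ := by
    rw [normMap, normMap, key, hord]
    simp
  have hNuSt : normMap ε (n + 1) u ∈ St := by
    apply Subgroup.list_prod_mem
    intro x hx
    simp only [List.mem_map, List.mem_range] at hx
    obtain ⟨i, -, rfl⟩ := hx
    exact hεpow i u hg
  set P : G := ((List.range n).map (fun i => (ε ^ (i + 1)) u)).prod with hPdef
  have hPSt : P ∈ St := by
    apply Subgroup.list_prod_mem
    intro x hx
    simp only [List.mem_map, List.mem_range] at hx
    obtain ⟨i, -, rfl⟩ := hx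
    exact hεpow _ u hg
  have h1 : normMap ε (n + 1) u = u * P := by
    rw [normMap, List.range_succ_eq_map, List.map_cons, List.map_map, List.prod_cons]
    simp only [hPdef, Function.comp_def, Nat.succ_eq_add_one, pow_zero, MulAut.one_apply]
  have h2 : ε (normMap ε (n + 1) u) = P * u := by
    rw [normMap, map_list_prod, List.map_map, List.range_succ, List.map_append,
      List.prod_append]
    have hε : ∀ i : ℕ, (⇑ε ∘ fun i => (ε ^ i) u) i = (ε ^ (i + 1)) u := by
      intro i
      simp [Function.comp, pow_succ', MulAut.mul_apply]
    have hlast : (ε ^ (n + 1)) u = u := by rw [hord]; rfl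
    simp only [List.map_cons, List.map_nil, List.prod_cons, List.prod_nil, mul_one, hε, hlast]
    rw [List.map_congr_left fun i _ => hε i]
  have hfix : ε (normMap ε (n + 1) u) = normMap ε (n + 1) u := by
    rw [h2, h1, (hab u hg P hPSt)]
  exact ⟨⟨u, hg, hNu⟩, hNu ▸ hNuSt, hNu ▸ hfix⟩
end
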